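/- arXiv:2601.20225 — 2 statements merged into one kernel-verified Lean document; each statement's English description precedes it below -/
import Mathlib

section
/- Restrict the 2-form ω = dτ∧dt + dζ∧dz on T*ℝ^{n+1} to the characteristic variety Σ = {τ = −|ζ|²}, parametrized (away from ζ=0) by (ζ, z_0^⊥, t_0, s̃) via z = z_0^⊥ + 2s̃ ζ/|ζ|, t = t_0 + s̃/|ζ|, where z_0^⊥ ⊥ ζ. Then the restriction equals dt_0 ∧ d|ζ|² − dz_0^⊥ ∧ dζ, independent of s̃. In particular the symplectic reduction of Σ by the Hamilton flow of τ + |ζ|² carries the symplectic form dt_0 ∧ d|ζ|² − dz_0^⊥ ∧ dζ on the parameter space of bicharacteristics. -/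
open scoped RealInnerProductSpace

noncomputable section

/-- Phase space `T*ℝ^{n+1}` with coordinates `(t, z, τ, ζ)`. -/
abbrev PS (n : ℕ) := ℝ × EuclideanSpace ℝ (Fin n) × ℝ × EuclideanSpace ℝ (Fin n)

/-- The canonical symplectic form `ω = dτ∧dt + ∑ dζ_j∧dz_j`. -/
def Omega {n : ℕ} (u v : PS n) : ℝ :=
  u.2.2.1 * v.1 - v.2.2.1 * u.1 + ⟪u.2.2.2, v.2.1⟫ - ⟪v.2.2.2, u.2.1⟫

/-- The parametrization `(ζ, z₀^⊥, t₀, s̃) ↦ (t₀ + s̃/|ζ|, z₀^⊥ + 2s̃ζ/|ζ|, -|ζ|², ζ)`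
of the characteristic variety `Σ = {τ = -|ζ|²}` away from `ζ = 0`. -/
def PsiS {n : ℕ} (p : EuclideanSpace ℝ (Fin n) × EuclideanSpace ℝ (Fin n) × ℝ × ℝ) : PS n :=
  (p.2.2.1 + p.2.2.2 / ‖p.1‖, p.2.1 + (2 * p.2.2.2 / ‖p.1‖) • p.1, -‖p.1‖ ^ 2, p.1)

/-!
Along a bicharacteristic of `τ + |ζ|²` one has `t = t₀ + σ` and `z = z₀^⊥ + 2σζ` with
`σ = s̃/|ζ|`. The terms of the pulled-back form involving `σ` are
`dτ∧dσ + 2 dζ∧(ζ dσ) + 2σ dζ∧dζ = -d|ζ|²∧dσ + d|ζ|²∧dσ = 0`, whatever the function `σ` is,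
so only `dτ∧dt₀ + dζ∧dz₀^⊥ = dt₀∧d|ζ|² - dz₀^⊥∧dζ` survives.
-/

section FlowOut

variable {E : Type*} [NormedAddCommGroup E] [InnerProductSpace ℝ E]

/-- The Hamilton flow of `τ + |ζ|²` (`ṫ = 1`, `ż = 2ζ`) run for time `σ q` from the point
`(t₀, w, -|ζ|², ζ)` of `Σ`, where `q = (ζ, w, t₀, s̃)`. -/
def flowOut (σ : E × E × ℝ × ℝ → ℝ) (q : E × E × ℝ × ℝ) : ℝ × E × ℝ × E :=
  (q.2.2.1 + σ q, q.2.1 + (2 * σ q) • q.1, -‖q.1‖ ^ 2, q.1)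

theorem fderiv_flowOut_apply {σ : E × E × ℝ × ℝ → ℝ} {p : E × E × ℝ × ℝ}
    (hσ : DifferentiableAt ℝ σ p) (u : E × E × ℝ × ℝ) :
    fderiv ℝ (flowOut σ) p u =
      (u.2.2.1 + fderiv ℝ σ p u, u.2.1 + ((2 * σ p) • u.1 + (2 * fderiv ℝ σ p u) • p.1),
        -(2 * ⟪p.1, u.1⟫), u.1) := by
  have hζ := (ContinuousLinearMap.fst ℝ E (E × ℝ × ℝ)).hasFDerivAt (x := p)
  have hw := ((ContinuousLinearMap.fst ℝ E (ℝ × ℝ)).comp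
    (ContinuousLinearMap.snd ℝ E (E × ℝ × ℝ))).hasFDerivAt (x := p)
  have ht := ((ContinuousLinearMap.fst ℝ ℝ ℝ).comp ((ContinuousLinearMap.snd ℝ E (ℝ × ℝ)).comp
    (ContinuousLinearMap.snd ℝ E (E × ℝ × ℝ)))).hasFDerivAt (x := p)
  have hσ' := hσ.hasFDerivAt
  have h : HasFDerivAt (flowOut σ) _ p :=
    (ht.add hσ').prodMk ((hw.add ((hσ'.const_mul 2).smul hζ)).prodMk (hζ.norm_sq.neg.prodMk hζ))
  rw [h.fderiv]
  simp

end FlowOut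

theorem omega_fderiv_flowOut {n : ℕ}
    {σ : EuclideanSpace ℝ (Fin n) × EuclideanSpace ℝ (Fin n) × ℝ × ℝ → ℝ}
    {p : EuclideanSpace ℝ (Fin n) × EuclideanSpace ℝ (Fin n) × ℝ × ℝ}
    (hσ : DifferentiableAt ℝ σ p)
    (u v : EuclideanSpace ℝ (Fin n) × EuclideanSpace ℝ (Fin n) × ℝ × ℝ) :
    Omega (fderiv ℝ (flowOut σ) p u) (fderiv ℝ (flowOut σ) p v) =
      u.2.2.1 * (2 * ⟪p.1, v.1⟫) - v.2.2.1 * (2 * ⟪p.1, u.1⟫) - (⟪u.2.1, v.1⟫ - ⟪v.2.1, u.1⟫) := by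
  rw [fderiv_flowOut_apply hσ, fderiv_flowOut_apply hσ]
  simp only [Omega, inner_add_right, real_inner_smul_right]
  rw [real_inner_comm u.1 v.1, real_inner_comm u.1 p.1, real_inner_comm v.1 p.1,
    real_inner_comm u.1 v.2.1, real_inner_comm v.1 u.2.1]
  ring

theorem psiS_eq_flowOut {n : ℕ} :
    (PsiS : EuclideanSpace ℝ (Fin n) × EuclideanSpace ℝ (Fin n) × ℝ × ℝ → PS n) =
      flowOut fun q => q.2.2.2 / ‖q.1‖ := by
  ext q <;> simp [PsiS, flowOut, mul_div_assoc]

/-- the restriction of `ω = dτ∧dt + dζ∧dz` to `Σ = {τ = -|ζ|²}`,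
in the bicharacteristic parametrization `(ζ, z₀^⊥, t₀, s̃)` (with `z₀^⊥ ⊥ ζ`), equals
`dt₀∧d|ζ|² - dz₀^⊥∧dζ`, independently of `s̃`.  Here points `p = (ζ, w, t₀, s̃)` satisfy
`⟪w, ζ⟫ = 0` and tangent vectors `u` the linearized constraint `⟪u_w, ζ⟫ + ⟪w, u_ζ⟫ = 0`. -/
theorem stmt8 (n : ℕ) :
    ∀ p : EuclideanSpace ℝ (Fin n) × EuclideanSpace ℝ (Fin n) × ℝ × ℝ,
      p.1 ≠ 0 → ⟪p.2.1, p.1⟫ = 0 →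
      ∀ u v : EuclideanSpace ℝ (Fin n) × EuclideanSpace ℝ (Fin n) × ℝ × ℝ,
        ⟪u.2.1, p.1⟫ + ⟪p.2.1, u.1⟫ = 0 →
        ⟪v.2.1, p.1⟫ + ⟪p.2.1, v.1⟫ = 0 →
        Omega
            (fderiv ℝ (PsiS : EuclideanSpace ℝ (Fin n) × EuclideanSpace ℝ (Fin n) × ℝ × ℝ →
              PS n) p u)
            (fderiv ℝ (PsiS : EuclideanSpace ℝ (Fin n) × EuclideanSpace ℝ (Fin n) × ℝ × ℝ →
              PS n) p v)
          = u.2.2.1 * (2 * ⟪p.1, v.1⟫) - v.2.2.1 * (2 * ⟪p.1, u.1⟫)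
            - (⟪u.2.1, v.1⟫ - ⟪v.2.1, u.1⟫) := by
  intro p hp _ u v _ _
  have hnorm : DifferentiableAt ℝ
      (fun q : EuclideanSpace ℝ (Fin n) × EuclideanSpace ℝ (Fin n) × ℝ × ℝ => ‖q.1‖) p :=
    differentiableAt_fst.norm ℝ hp
  have hσ : DifferentiableAt ℝ
      (fun q : EuclideanSpace ℝ (Fin n) × EuclideanSpace ℝ (Fin n) × ℝ × ℝ => q.2.2.2 / ‖q.1‖) p := by
    fun_prop (disch := exact norm_ne_zero_iff.mpr hp)
  rw [psiS_eq_flowOut]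
  exact omega_fderiv_flowOut hσ u v
end
end

section
/- Consider blowup of a submanifold T ⊂ ∂M contained in the boundary of a manifold with boundary M. Choose local coordinates (x, y, z) with x a boundary defining function, T = {x = y = 0}, and z coordinates on T. Under any other such choice of coordinates (x̃, ỹ, z̃) (i.e. smooth change of coordinates preserving these properties), the projective coordinates Y_j = y_j/x on the interior of the front face transform by an invertible affine map (in Y, with coefficients depending smoothly on z): Ỹ = A(z)Y + b(z) with A(z) invertible. Hence the fiber-interior of the front face of [M;T] carries a natural affine bundle structure over T. -/
noncomputable section

theorem blowup_aux {Ek Em : Type*}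
    [NormedAddCommGroup Ek] [NormedSpace ℝ Ek] [FiniteDimensional ℝ Ek]
    [NormedAddCommGroup Em] [NormedSpace ℝ Em] [FiniteDimensional ℝ Em]
    (φ : ℝ × Ek × Em → ℝ × Ek × Em)
    (hφ : ContDiff ℝ (⊤ : ℕ∞) φ)
    (hjac : ∀ p, Function.Bijective ⇑(fderiv ℝ φ p))
    (hbdf : ∀ (y : Ek) (z : Em), (φ (0, y, z)).1 = 0)
    (hT : ∀ z : Em, (φ (0, 0, z)).2.1 = 0) :
    ∃ (A : Em → (Ek →L[ℝ] Ek)) (b : Em → Ek),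
      ContDiff ℝ (⊤ : ℕ∞) A ∧ ContDiff ℝ (⊤ : ℕ∞) b ∧
      (∀ z, Function.Bijective ⇑(A z)) ∧
      (∀ (z : Em) (Y : Ek),
        Filter.Tendsto
          (fun x : ℝ => ((φ (x, x • Y, z)).1)⁻¹ • (φ (x, x • Y, z)).2.1)
          (nhdsWithin 0 (Set.Ioi 0)) (nhds (A z Y + b z))) := by
  classical
  have hφdiff : Differentiable ℝ φ := hφ.differentiable (by simp)
  set D : Em → (ℝ × Ek × Em →L[ℝ] ℝ × Ek × Em) := fun z => fderiv ℝ φ (0, 0, z) with hDdef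
  set P1 : (ℝ × Ek × Em) →L[ℝ] ℝ := ContinuousLinearMap.fst ℝ ℝ (Ek × Em) with hP1
  set Py : (ℝ × Ek × Em) →L[ℝ] Ek :=
    (ContinuousLinearMap.fst ℝ Ek Em).comp (ContinuousLinearMap.snd ℝ ℝ (Ek × Em)) with hPy
  set ey : Ek →L[ℝ] ℝ × Ek × Em :=
    (0 : Ek →L[ℝ] ℝ).prod ((ContinuousLinearMap.id ℝ Ek).prod 0) with hey
  -- Fact 1 : the differential of x̃ kills the boundary directions
  have h1 : ∀ (z : Em) (v : Ek) (w : Em), (D z ((0:ℝ), v, w)).1 = 0 := by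
    intro z v w
    have hι : HasFDerivAt (fun p : Ek × Em => (((0:ℝ), p) : ℝ × Ek × Em))
        ((0 : (Ek × Em) →L[ℝ] ℝ).prod (ContinuousLinearMap.id ℝ (Ek × Em))) ((0:Ek), z) :=
      HasFDerivAt.prodMk (hasFDerivAt_const _ _) (hasFDerivAt_id _)
    have hcomp : HasFDerivAt (fun p : Ek × Em => (φ ((0:ℝ), p)).1)
        (P1.comp ((D z).comp
          ((0 : (Ek × Em) →L[ℝ] ℝ).prod (ContinuousLinearMap.id ℝ (Ek × Em))))) ((0:Ek), z) := by
      have h2 := (hφdiff ((0:ℝ), (0:Ek), z)).hasFDerivAt.comp ((0:Ek), z) hι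
      exact P1.hasFDerivAt.comp _ h2
    have hzero : HasFDerivAt (fun p : Ek × Em => (φ ((0:ℝ), p)).1)
        (0 : (Ek × Em) →L[ℝ] ℝ) ((0:Ek), z) := by
      have heq : (fun p : Ek × Em => (φ ((0:ℝ), p)).1) = fun _ => (0:ℝ) := by
        funext p; exact hbdf p.1 p.2
      rw [heq]; exact hasFDerivAt_const _ _
    have hu := hcomp.unique hzero
    have := congrArg (fun T : (Ek × Em) →L[ℝ] ℝ => T (v, w)) hu
    simpa [hP1] using this
  -- Fact 2 : the differential of ỹ kills the T directions
  have h2 : ∀ (z : Em) (w : Em), (D z ((0:ℝ), (0:Ek), w)).2.1 = 0 := by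
    intro z w
    have hι : HasFDerivAt (fun q : Em => (((0:ℝ), (0:Ek), q) : ℝ × Ek × Em))
        ((0 : Em →L[ℝ] ℝ).prod ((0 : Em →L[ℝ] Ek).prod (ContinuousLinearMap.id ℝ Em))) z :=
      HasFDerivAt.prodMk (hasFDerivAt_const _ _) (HasFDerivAt.prodMk (hasFDerivAt_const _ _) (hasFDerivAt_id _))
    have hcomp : HasFDerivAt (fun q : Em => (φ ((0:ℝ), (0:Ek), q)).2.1)
        (Py.comp ((D z).comp
          ((0 : Em →L[ℝ] ℝ).prod ((0 : Em →L[ℝ] Ek).prod (ContinuousLinearMap.id ℝ Em))))) z := by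
      have h2 := (hφdiff ((0:ℝ), (0:Ek), z)).hasFDerivAt.comp z hι
      exact Py.hasFDerivAt.comp _ h2
    have hzero : HasFDerivAt (fun q : Em => (φ ((0:ℝ), (0:Ek), q)).2.1)
        (0 : Em →L[ℝ] Ek) z := by
      have heq : (fun q : Em => (φ ((0:ℝ), (0:Ek), q)).2.1) = fun _ => (0:Ek) := by
        funext q; exact hT q
      rw [heq]; exact hasFDerivAt_const _ _
    have hu := hcomp.unique hzero
    have := congrArg (fun T : Em →L[ℝ] Ek => T w) hu
    simpa [hPy] using this
  have hdec : ∀ u : ℝ × Ek × Em,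
      u = u.1 • (((1:ℝ), (0:Ek), (0:Em)) : ℝ × Ek × Em) + ((0:ℝ), u.2.1, u.2.2) := by
    intro u
    refine Prod.ext ?_ (Prod.ext ?_ ?_) <;> simp
  set a : Em → ℝ := fun z => (D z ((1:ℝ), (0:Ek), (0:Em))).1 with ha
  have hDfst : ∀ (z : Em) (u : ℝ × Ek × Em), (D z u).1 = u.1 * a z := by
    intro z u
    conv_lhs => rw [hdec u]
    rw [map_add, map_smul]
    simp [h1 z u.2.1 u.2.2, ha]
  have ha_ne : ∀ z, a z ≠ 0 := by
    intro z hz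
    obtain ⟨u, hu⟩ := (hjac ((0:ℝ), (0:Ek), z)).2 (((1:ℝ), (0:Ek), (0:Em)) : ℝ × Ek × Em)
    have h3 : (D z u).1 = u.1 * a z := hDfst z u
    rw [hu, hz, mul_zero] at h3
    exact one_ne_zero h3
  have hDinj : ∀ z : Em, Function.Injective ⇑(D z) := fun z => (hjac ((0:ℝ), (0:Ek), z)).1
  set L : Em → (Ek →L[ℝ] Ek) := fun z => Py.comp ((D z).comp ey) with hL
  set wv : Em → Ek := fun z => Py (D z ((1:ℝ), (0:Ek), (0:Em))) with hwv
  have hLapp : ∀ (z : Em) (v : Ek), L z v = (D z ((0:ℝ), v, (0:Em))).2.1 := fun z v => rfl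
  -- L z is injective, hence bijective
  have hLinj : ∀ z : Em, Function.Injective ⇑(L z) := by
    intro z
    set q : Em →L[ℝ] Em := ((ContinuousLinearMap.snd ℝ Ek Em).comp
        (ContinuousLinearMap.snd ℝ ℝ (Ek × Em))).comp ((D z).comp
        ((0 : Em →L[ℝ] ℝ).prod ((0 : Em →L[ℝ] Ek).prod (ContinuousLinearMap.id ℝ Em)))) with hq
    have hqapp : ∀ w : Em, q w = (D z ((0:ℝ), (0:Ek), w)).2.2 := fun w => rfl
    have hqinj : Function.Injective ⇑q := by
      intro w w' hww
      have hD0 : D z ((0:ℝ), (0:Ek), w) = D z ((0:ℝ), (0:Ek), w') := by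
        refine Prod.ext ?_ (Prod.ext ?_ ?_)
        · rw [h1 z 0 w, h1 z 0 w']
        · rw [h2 z w, h2 z w']
        · exact hww
      have := hDinj z hD0
      simpa [Prod.ext_iff] using this
    have hqsurj : Function.Surjective ⇑q :=
      (LinearMap.injective_iff_surjective (f := (q : Em →ₗ[ℝ] Em))).mp hqinj
    have hker : ∀ v : Ek, L z v = 0 → v = 0 := by
      intro v hv
      obtain ⟨w, hw⟩ := hqsurj ((D z ((0:ℝ), v, (0:Em))).2.2)
      have hD0 : D z ((0:ℝ), v, (0:Em)) = D z ((0:ℝ), (0:Ek), w) := by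
        refine Prod.ext ?_ (Prod.ext ?_ ?_)
        · rw [h1 z v 0, h1 z 0 w]
        · rw [h2 z w]; exact hv
        · exact (hqapp w ▸ hw).symm
      have := hDinj z hD0
      simp [Prod.ext_iff] at this
      exact this.1
    intro v v' hvv
    have h0 : L z (v - v') = 0 := by rw [map_sub, hvv, sub_self]
    exact sub_eq_zero.mp (hker _ h0)
  have hLbij : ∀ z : Em, Function.Bijective ⇑(L z) := by
    intro z
    exact ⟨hLinj z, (LinearMap.injective_iff_surjective
      (f := ((L z) : Ek →ₗ[ℝ] Ek))).mp (hLinj z)⟩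
  -- definitions of A and b
  refine ⟨fun z => (a z)⁻¹ • L z, fun z => (a z)⁻¹ • wv z, ?_, ?_, ?_, ?_⟩
  -- smoothness of A
  case _ =>
    have hDsm : ContDiff ℝ (⊤ : ℕ∞) D := by
      have h0 : ContDiff ℝ (⊤ : ℕ∞) (fderiv ℝ φ) := hφ.fderiv_right (by simp)
      exact h0.comp (contDiff_const.prodMk (contDiff_const.prodMk contDiff_id))
    have hasm : ContDiff ℝ (⊤ : ℕ∞) a := by
      have := (hDsm.clm_apply (contDiff_const
        (c := (((1:ℝ), (0:Ek), (0:Em)) : ℝ × Ek × Em)))).fst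
      exact this
    have hLsm : ContDiff ℝ (⊤ : ℕ∞) L :=
      (contDiff_const (c := Py)).clm_comp (hDsm.clm_comp (contDiff_const (c := ey)))
    exact (hasm.inv ha_ne).smul hLsm
  case _ =>
    have hDsm : ContDiff ℝ (⊤ : ℕ∞) D := by
      have h0 : ContDiff ℝ (⊤ : ℕ∞) (fderiv ℝ φ) := hφ.fderiv_right (by simp)
      exact h0.comp (contDiff_const.prodMk (contDiff_const.prodMk contDiff_id))
    have hasm : ContDiff ℝ (⊤ : ℕ∞) a := by
      have := (hDsm.clm_apply (contDiff_const
        (c := (((1:ℝ), (0:Ek), (0:Em)) : ℝ × Ek × Em)))).fst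
      exact this
    have hwsm : ContDiff ℝ (⊤ : ℕ∞) wv := by
      have := hDsm.clm_apply (contDiff_const
        (c := (((1:ℝ), (0:Ek), (0:Em)) : ℝ × Ek × Em)))
      exact Py.contDiff.comp this
    exact (hasm.inv ha_ne).smul hwsm
  -- bijectivity of A z
  case _ =>
    intro z
    constructor
    · intro v v' hvv
      simp only [ContinuousLinearMap.smul_apply] at hvv
      have := smul_right_injective Ek (inv_ne_zero (ha_ne z)) hvv
      exact hLinj z this
    · intro v
      obtain ⟨u, hu⟩ := (hLbij z).2 (a z • v)
      refine ⟨u, ?_⟩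
      simp only [ContinuousLinearMap.smul_apply, hu, smul_smul,
        inv_mul_cancel₀ (ha_ne z), one_smul]
  -- the limit
  case _ =>
    intro z Y
    set f : ℝ → ℝ × Ek × Em := fun x => φ (x, x • Y, z) with hf
    have hc : HasDerivAt (fun x : ℝ => ((x, x • Y, z) : ℝ × Ek × Em)) ((1:ℝ), Y, (0:Em)) 0 := by
      have hx : HasDerivAt (fun x : ℝ => x) 1 0 := hasDerivAt_id 0
      have hy : HasDerivAt (fun x : ℝ => x • Y) Y 0 := by
        simpa using (hasDerivAt_id (0:ℝ)).smul_const Y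
      exact HasDerivAt.prodMk hx (HasDerivAt.prodMk hy (hasDerivAt_const _ _))
    have hpt : (((0:ℝ), (0:ℝ) • Y, z) : ℝ × Ek × Em) = ((0:ℝ), (0:Ek), z) := by simp
    have hfD : HasFDerivAt φ (D z) (((0:ℝ), (0:ℝ) • Y, z) : ℝ × Ek × Em) := by
      rw [hpt]; exact (hφdiff _).hasFDerivAt
    have hder : HasDerivAt f (D z ((1:ℝ), Y, (0:Em))) 0 := hfD.comp_hasDerivAt 0 hc
    have hslope := hasDerivAt_iff_tendsto_slope.mp hder
    have hmono : nhdsWithin (0:ℝ) (Set.Ioi 0) ≤ nhdsWithin (0:ℝ) {(0:ℝ)}ᶜ :=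
      nhdsWithin_mono 0 (fun x hx => ne_of_gt hx)
    have hslope' := hslope.mono_left hmono
    have hf0 : f 0 = φ ((0:ℝ), (0:Ek), z) := by rw [hf]; simp
    -- first-component limit
    have hlim1 : Filter.Tendsto (fun x : ℝ => x⁻¹ * (f x).1) (nhdsWithin 0 (Set.Ioi 0))
        (nhds (a z)) := by
      have hcont := (continuous_fst.tendsto _).comp hslope'
      have heq : ∀ x : ℝ, (slope f 0 x).1 = x⁻¹ * (f x).1 := by
        intro x
        simp [slope, hf0, hbdf 0 z]
      have hval : (D z ((1:ℝ), Y, (0:Em))).1 = a z := by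
        rw [hDfst]
        simp
      rw [hval] at hcont
      exact hcont.congr heq
    -- second-component limit
    have hlim2 : Filter.Tendsto (fun x : ℝ => x⁻¹ • (f x).2.1) (nhdsWithin 0 (Set.Ioi 0))
        (nhds (wv z + L z Y)) := by
      have hcont : Filter.Tendsto (fun x : ℝ => (slope f 0 x).2.1)
          (nhdsWithin 0 (Set.Ioi 0)) (nhds ((D z ((1:ℝ), Y, (0:Em))).2.1)) :=
        ((continuous_fst.comp continuous_snd).tendsto _).comp hslope'
      have heq : ∀ x : ℝ, ((slope f 0 x).2.1 : Ek) = x⁻¹ • (f x).2.1 := by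
        intro x
        simp [slope, hf0, hT z]
      have hval : (D z ((1:ℝ), Y, (0:Em))).2.1 = wv z + L z Y := by
        have hsplit : (((1:ℝ), Y, (0:Em)) : ℝ × Ek × Em)
            = ((1:ℝ), (0:Ek), (0:Em)) + ((0:ℝ), Y, (0:Em)) := by
          refine Prod.ext ?_ (Prod.ext ?_ ?_) <;> simp
        rw [hsplit, map_add]
        rw [hLapp]
        rfl
      rw [hval] at hcont
      exact hcont.congr heq
    have hinv : Filter.Tendsto (fun x : ℝ => (x⁻¹ * (f x).1)⁻¹) (nhdsWithin 0 (Set.Ioi 0))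
        (nhds ((a z)⁻¹)) := hlim1.inv₀ (ha_ne z)
    have hmain := hinv.smul hlim2
    have hfinal : Filter.Tendsto (fun x : ℝ => ((f x).1)⁻¹ • (f x).2.1)
        (nhdsWithin 0 (Set.Ioi 0)) (nhds ((a z)⁻¹ • (wv z + L z Y))) := by
      refine hmain.congr' ?_
      filter_upwards [self_mem_nhdsWithin] with x hx
      have hx0 : x ≠ 0 := ne_of_gt hx
      rw [mul_inv, inv_inv, smul_smul, mul_comm x, mul_assoc, mul_inv_cancel₀ hx0, mul_one]
    have hvaleq : (a z)⁻¹ • (wv z + L z Y)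
        = ((a z)⁻¹ • L z) Y + (a z)⁻¹ • wv z := by
      rw [smul_add, add_comm]
      rfl
    rw [hvaleq] at hfinal
    exact hfinal

/-- blowup of a boundary submanifold `T = {x = y = 0} ⊂ ∂M = {x = 0}`.
For any smooth change of coordinates `φ = (x̃, ỹ, z̃)` preserving the structure
(`x̃` a boundary defining function, `{x̃ = ỹ = 0} = {x = y = 0}`, Jacobian invertible),
the projective coordinates `Y = y/x` on the interior of the front face transform by an
invertible affine map `Ỹ = A(z)Y + b(z)` with coefficients depending smoothly on `z`:
`ỹ/x̃ → A(z)Y + b(z)` as `x → 0⁺` along `y = xY`.  Hence the fiber-interior of the front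
face of `[M; T]` carries a natural affine bundle structure over `T`. -/
theorem stmt14 (k m : ℕ)
    (φ : ℝ × EuclideanSpace ℝ (Fin k) × EuclideanSpace ℝ (Fin m) →
      ℝ × EuclideanSpace ℝ (Fin k) × EuclideanSpace ℝ (Fin m))
    (hφ : ContDiff ℝ (⊤ : ℕ∞) φ)
    (hjac : ∀ p, Function.Bijective ⇑(fderiv ℝ φ p))
    (hbdf : ∀ (y : EuclideanSpace ℝ (Fin k)) (z : EuclideanSpace ℝ (Fin m)),
      (φ (0, y, z)).1 = 0)
    (hT : ∀ z : EuclideanSpace ℝ (Fin m), (φ (0, 0, z)).2.1 = 0)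
    (hpos : ∀ x : ℝ, 0 < x → ∀ (y : EuclideanSpace ℝ (Fin k))
      (z : EuclideanSpace ℝ (Fin m)), 0 < (φ (x, y, z)).1) :
    ∃ (A : EuclideanSpace ℝ (Fin m) →
        (EuclideanSpace ℝ (Fin k) →L[ℝ] EuclideanSpace ℝ (Fin k)))
      (b : EuclideanSpace ℝ (Fin m) → EuclideanSpace ℝ (Fin k)),
      ContDiff ℝ (⊤ : ℕ∞) A ∧ ContDiff ℝ (⊤ : ℕ∞) b ∧
      (∀ z, Function.Bijective ⇑(A z)) ∧
      (∀ (z : EuclideanSpace ℝ (Fin m)) (Y : EuclideanSpace ℝ (Fin k)),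
        Filter.Tendsto
          (fun x : ℝ => ((φ (x, x • Y, z)).1)⁻¹ • (φ (x, x • Y, z)).2.1)
          (nhdsWithin 0 (Set.Ioi 0)) (nhds (A z Y + b z))) :=
  blowup_aux φ hφ hjac hbdf hT
end
end
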